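/- Suppose the system satisfies monotonicity in payoffs. Then for every β ∈ ℝⁿ with β ⪰ 0 and all subsets S′ ⊆ S ⊆ N, min_{d ∈ D(S)} ⟨β^S, p(d)^S⟩ ≤ min_{d ∈ D(S)} ⟨β^{S∖S′}, p(d)^{S∖S′}⟩ + min_{d ∈ D(S′)} ⟨β^{S′}, p(d)^{S′}⟩. -/

import Mathlib

/-
Take a minimizer `d₁ ∈ D(S)` of the `S \ S'` part and a minimizer `d₂ ∈ D(S')` of the `S'` part,
and merge them into one decision `d ∈ D(S)`: first the users of `S'` in the order of `d₂`, then
those of `S \ S'` in the order of `d₁`, then everybody else. Every user of `S'` (resp. `S \ S'`)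
has at least the same set of higher-priority users under `d` as under `d₂` (resp. `d₁`), so by
monotonicity its payoff under `d` is no larger. Hence the `S`-objective at `d`, which bounds the
left-hand minimum, is at most the sum of the two minima.
-/

open Finset Set

/-- `inDS S d` : the priority decision `d` assigns the `|S|` highest priorities
(i.e. the ranks `k` with `(k : ℕ) < S.card`) exactly to the users in `S`. -/
def inDS {n : ℕ} (S : Finset (Fin n)) (d : Equiv.Perm (Fin n)) : Prop :=
  ∀ k : Fin n, d k ∈ S ↔ (k : ℕ) < S.card

/-- The projection `x^S` of a vector on the coordinates in `S`. -/
def projS {n : ℕ} (S : Finset (Fin n)) (x : Fin n → ℝ) : Fin n → ℝ :=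
  fun i => if i ∈ S then x i else 0

/-- Euclidean inner product on `ℝⁿ`. -/
def ip {n : ℕ} (a b : Fin n → ℝ) : ℝ := ∑ i, a i * b i

/-- `P = {p(d) : d ∈ D}`. -/
def Pfull {n : ℕ} (p : Equiv.Perm (Fin n) → Fin n → ℝ) : Set (Fin n → ℝ) :=
  Set.range p

/-- `P^S = {p(d)^S : d ∈ D(S)}`. -/
def PS {n : ℕ} (p : Equiv.Perm (Fin n) → Fin n → ℝ) (S : Finset (Fin n)) :
    Set (Fin n → ℝ) :=
  {y | ∃ d : Equiv.Perm (Fin n), inDS S d ∧ y = projS S (p d)}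

/-- `C` : the set of nonnegative vectors dominated by a point of `conv(P)`. -/
def Cfull {n : ℕ} (p : Equiv.Perm (Fin n) → Fin n → ℝ) : Set (Fin n → ℝ) :=
  {q | (∀ i, 0 ≤ q i) ∧ ∃ x ∈ convexHull ℝ (Pfull p), ∀ i, q i ≤ x i}

/-- `C^S` : nonnegative vectors supported on `S` dominated by a point of `conv(P^S)`. -/
def CS {n : ℕ} (p : Equiv.Perm (Fin n) → Fin n → ℝ) (S : Finset (Fin n)) :
    Set (Fin n → ℝ) :=
  {q | (∀ i, 0 ≤ q i) ∧ (∀ i, i ∉ S → q i = 0) ∧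
    ∃ x ∈ convexHull ℝ (PS p S), ∀ i, q i ≤ x i}

/-- `B^S` : nonnegative vectors supported on `S` dominating a point of `conv(P^S)`. -/
def BS {n : ℕ} (p : Equiv.Perm (Fin n) → Fin n → ℝ) (S : Finset (Fin n)) :
    Set (Fin n → ℝ) :=
  {q | (∀ i, 0 ≤ q i) ∧ (∀ i, i ∉ S → q i = 0) ∧
    ∃ x ∈ convexHull ℝ (PS p S), ∀ i, x i ≤ q i}

/-- `S_i(d)` : the set of users with higher priority than user `i` under decision `d`. -/
def higherSet {n : ℕ} (d : Equiv.Perm (Fin n)) (i : Fin n) : Set (Fin n) :=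
  {j | (d.symm j : ℕ) < (d.symm i : ℕ)}

/-- Monotonicity in payoffs: if `S_i(d₁) ⊆ S_i(d₂)` then `p_i(d₁) ≥ p_i(d₂)`. -/
def Mono {n : ℕ} (p : Equiv.Perm (Fin n) → Fin n → ℝ) : Prop :=
  ∀ d₁ d₂ : Equiv.Perm (Fin n), ∀ i : Fin n,
    higherSet d₁ i ⊆ higherSet d₂ i → p d₂ i ≤ p d₁ i

/-- The inner-bound region `R_IB`. -/
def RIB {n : ℕ} (p : Equiv.Perm (Fin n) → Fin n → ℝ) : Set (Fin n → ℝ) :=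
  {q | (∀ i, 0 ≤ q i) ∧ ∃ α : Fin n → ℝ, (∀ i, 0 < α i) ∧
    ∀ S : Finset (Fin n), ∀ d : Equiv.Perm (Fin n), inDS S d →
      ∑ i ∈ S, α i * q i ≤ ∑ i ∈ S, α i * p d i}

/-- The region `R = {q ⪰ 0 : ∀ S, q^S ∈ C^S \ B^S}`. -/
def Rreg {n : ℕ} (p : Equiv.Perm (Fin n) → Fin n → ℝ) : Set (Fin n → ℝ) :=
  {q | (∀ i, 0 ≤ q i) ∧ ∀ S : Finset (Fin n), projS S q ∈ CS p S \ BS p S}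

section PriorityDecision

variable {n : ℕ}

lemma mem_higherSet {d : Equiv.Perm (Fin n)} {i j : Fin n} :
    j ∈ higherSet d i ↔ d.symm j < d.symm i :=
  Iff.rfl

lemma ncard_higherSet (d : Equiv.Perm (Fin n)) (i : Fin n) :
    (higherSet d i).ncard = d.symm i := by
  have : higherSet d i = d.symm ⁻¹' (Finset.Iio (d.symm i) : Set (Fin n)) := by
    ext j; simp [mem_higherSet]
  rw [this, Set.ncard_preimage_of_injective_subset_range d.symm.injective (by simp),
    Set.ncard_coe_finset, Fin.card_Iio]

lemma mem_of_mem_higherSet {S : Finset (Fin n)} {d : Equiv.Perm (Fin n)} (hd : inDS S d)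
    {i j : Fin n} (hi : i ∈ S) (hj : j ∈ higherSet d i) : j ∈ S := by
  have hiS : (d.symm i : ℕ) < S.card := (hd _).1 (by simpa using hi)
  simpa using (hd (d.symm j)).2 (lt_trans hj hiS)

lemma notMem_higherSet_self (d : Equiv.Perm (Fin n)) (i : Fin n) : i ∉ higherSet d i :=
  lt_irrefl (d.symm i : ℕ)

lemma inDS_of_higherSet_subset {S : Finset (Fin n)} {d : Equiv.Perm (Fin n)}
    (hS : ∀ i ∈ S, higherSet d i ⊆ S) : inDS S d := by
  intro k
  have hk : (k : ℕ) = (higherSet d (d k)).ncard := by simp [ncard_higherSet]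
  rw [hk, ← Set.ncard_coe_finset]
  constructor
  · intro hi
    exact Set.ncard_lt_ncard ⟨hS _ hi, fun h => notMem_higherSet_self d (d k) (h hi)⟩
  · intro hlt
    by_contra hi
    refine hlt.not_ge (Set.ncard_le_ncard fun j hj => ?_)
    have hne : (d.symm (d k) : ℕ) ≠ d.symm j := fun h =>
      hi (d.symm.injective (Fin.ext h) ▸ hj)
    by_contra hji
    exact hi (hS j hj (lt_of_le_of_ne (not_lt.1 hji) hne))

lemma higherSet_sort {α : Type*} [LinearOrder α] {f : Fin n → α}
    (hf : Function.Injective f) (i : Fin n) :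
    higherSet (Tuple.sort f) i = {j | f j < f i} := by
  have hmono : StrictMono (f ∘ Tuple.sort f) :=
    (Tuple.monotone_sort f).strictMono_of_injective (hf.comp (Tuple.sort f).injective)
  ext j
  simp only [mem_higherSet, Set.mem_ofPred_eq, ← hmono.lt_iff_lt, Function.comp_apply,
    Equiv.apply_symm_apply]

lemma inDS_sort {α : Type*} [LinearOrder α] {f : Fin n → α} (hf : Function.Injective f)
    {S : Finset (Fin n)} (hS : ∀ i ∈ S, ∀ j, f j < f i → j ∈ S) : inDS S (Tuple.sort f) :=
  inDS_of_higherSet_subset fun i hi j hj => hS i hi j (by rwa [higherSet_sort hf] at hj)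

lemma exists_inDS (S : Finset (Fin n)) : ∃ d, inDS S d := by
  let key : Fin n → ℕ ×ₗ Fin n := fun i => toLex (if i ∈ S then 0 else 1, i)
  refine ⟨Tuple.sort key, inDS_sort (fun i j h => (Prod.ext_iff.1 (toLex.injective h)).2) ?_⟩
  intro i hi j hj
  by_contra hjS
  simp [Prod.Lex.toLex_lt_toLex, hi, hjS] at hj

lemma ip_projS (A : Finset (Fin n)) (β x : Fin n → ℝ) :
    ip (projS A β) (projS A x) = ∑ i ∈ A, β i * x i := by
  simp [ip, projS, ite_mul, Finset.sum_ite_mem]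

lemma exists_inDS_higherSet_supset {S' S : Finset (Fin n)} (hS : S' ⊆ S)
    {d₁ d₂ : Equiv.Perm (Fin n)} (h₁ : inDS S d₁) (h₂ : inDS S' d₂) :
    ∃ d, inDS S d ∧ (∀ i ∈ S \ S', higherSet d₁ i ⊆ higherSet d i) ∧
      ∀ i ∈ S', higherSet d₂ i ⊆ higherSet d i := by
  -- Sorting by this key lists `S'` as in `d₂`, then `S \ S'` as in `d₁`, then the rest.
  let key : Fin n → ℕ ×ₗ Fin n := fun i =>
    toLex (if i ∈ S' then 0 else if i ∈ S then 1 else 2,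
      if i ∈ S' then d₂.symm i else d₁.symm i)
  have hkey : Function.Injective key := by
    intro i j h
    obtain ⟨hc, hr⟩ := Prod.ext_iff.1 (toLex.injective h)
    dsimp only at hc hr
    split_ifs at hc hr <;> first
      | exact d₂.symm.injective hr | exact d₁.symm.injective hr
  refine ⟨Tuple.sort key, inDS_sort hkey ?_, ?_, ?_⟩
  · intro i hi j hj
    by_contra hjS
    have hjS' : j ∉ S' := fun h => hjS (hS h)
    by_cases hiS' : i ∈ S' <;>
      simp [key, Prod.Lex.toLex_lt_toLex, hi, hiS', hjS, hjS'] at hj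
  · intro i hi j hj
    obtain ⟨hiS, hiS'⟩ := Finset.mem_sdiff.1 hi
    have hjS := mem_of_mem_higherSet h₁ hiS hj
    rw [higherSet_sort hkey]
    by_cases hjS' : j ∈ S'
    · simp [key, Prod.Lex.toLex_lt_toLex, hiS, hiS', hjS']
    · simpa [key, Prod.Lex.toLex_lt_toLex, hiS, hiS', hjS, hjS'] using mem_higherSet.1 hj
  · intro i hi j hj
    have hjS' := mem_of_mem_higherSet h₂ hi hj
    rw [higherSet_sort hkey]
    simpa [key, Prod.Lex.toLex_lt_toLex, hi, hjS'] using mem_higherSet.1 hj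

lemma sum_le_sum_of_higherSet_subset {p : Equiv.Perm (Fin n) → Fin n → ℝ} (hmono : Mono p)
    {β : Fin n → ℝ} (hβ : ∀ i, 0 ≤ β i) {A : Finset (Fin n)} {d d' : Equiv.Perm (Fin n)}
    (h : ∀ i ∈ A, higherSet d' i ⊆ higherSet d i) :
    ∑ i ∈ A, β i * p d i ≤ ∑ i ∈ A, β i * p d' i :=
  Finset.sum_le_sum fun i hi => mul_le_mul_of_nonneg_left (hmono d' d i (h i hi)) (hβ i)

end PriorityDecision

theorem stmt13_general {n : ℕ}
    (p : Equiv.Perm (Fin n) → Fin n → ℝ)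
    (hmono : Mono p) :
    ∀ β : Fin n → ℝ, (∀ i, 0 ≤ β i) → ∀ S' S : Finset (Fin n), S' ⊆ S →
      sInf ((fun d => ip (projS S β) (projS S (p d))) '' {d | inDS S d}) ≤
        sInf ((fun d => ip (projS (S \ S') β) (projS (S \ S') (p d))) ''
            {d | inDS S d}) +
        sInf ((fun d => ip (projS S' β) (projS S' (p d))) '' {d | inDS S' d}) := by
  intro β hβ S' S hS
  have hne : ∀ T : Finset (Fin n), {d | inDS T d}.Nonempty := exists_inDS
  obtain ⟨d₁, hd₁, hmin₁⟩ := ((hne S).image _).csInf_mem ((Set.toFinite _).image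
    fun d => ip (projS (S \ S') β) (projS (S \ S') (p d)))
  obtain ⟨d₂, hd₂, hmin₂⟩ := ((hne S').image _).csInf_mem ((Set.toFinite _).image
    fun d => ip (projS S' β) (projS S' (p d)))
  dsimp only at hmin₁ hmin₂
  obtain ⟨d, hd, hsup₁, hsup₂⟩ := exists_inDS_higherSet_supset hS hd₁ hd₂
  calc sInf ((fun d => ip (projS S β) (projS S (p d))) '' {d | inDS S d})
        ≤ ip (projS S β) (projS S (p d)) :=
        csInf_le ((Set.toFinite _).image _).bddBelow (Set.mem_image_of_mem _ hd)
    _ = ∑ i ∈ S \ S', β i * p d i + ∑ i ∈ S', β i * p d i := by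
        rw [ip_projS, Finset.sum_sdiff hS]
    _ ≤ ∑ i ∈ S \ S', β i * p d₁ i + ∑ i ∈ S', β i * p d₂ i :=
        add_le_add (sum_le_sum_of_higherSet_subset hmono hβ hsup₁)
          (sum_le_sum_of_higherSet_subset hmono hβ hsup₂)
    _ = _ := by rw [← hmin₁, ← hmin₂, ip_projS, ip_projS]

theorem stmt13 {n : ℕ} (hn : 1 ≤ n)
    (p : Equiv.Perm (Fin n) → Fin n → ℝ) (hp : ∀ d i, 0 ≤ p d i)
    (hmono : Mono p) :
    ∀ β : Fin n → ℝ, (∀ i, 0 ≤ β i) → ∀ S' S : Finset (Fin n), S' ⊆ S →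
      sInf ((fun d => ip (projS S β) (projS S (p d))) '' {d | inDS S d}) ≤
        sInf ((fun d => ip (projS (S \ S') β) (projS (S \ S') (p d))) ''
            {d | inDS S d}) +
        sInf ((fun d => ip (projS S' β) (projS S' (p d))) '' {d | inDS S' d}) :=
  stmt13_general p hmono
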